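/- Extinction at time π/(4σ): assume ∫_ℝ exp(tan(2σt) y²/(2σ)) u₀(y) dy < ∞ for every t ∈ [0, π/(4σ)) (i.e. T = π/(4σ)). Then for every t ∈ (0, π/(4σ)): ∫_ℝ u(t,x) dx = 1 and 0 ≤ u(t,x) ≤ (2πσ tan(2σt))^{-1/2} for all x ∈ ℝ; consequently sup_{x ∈ ℝ} u(t,x) → 0 as t → (π/(4σ))⁻. -/

import Mathlib

/-!
With `θ = 2σt` and `τ = tan θ`, completing the square (using `1 + τ² = 1 / cos² θ`) gives
`e^{τx²/2σ} e^{-(x/cos θ - y)²/(2στ)} = e^{-(x - y/cos θ)²/(2στ)} e^{τy²/2σ}`.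
Hence `u(t, ·)` is `(2πστ)^{-1/2} / ∫ e^{τy²/2σ} u₀` times a superposition, against the weight
`e^{τy²/2σ} u₀(y)`, of Gaussians of height one and mass `√(2πστ)`. Fubini gives total mass one,
the height bound gives `u(t, ·) ≤ (2πστ)^{-1/2}`, and `τ → ∞` as `t → π/(4σ)`.
-/

open MeasureTheory Filter

/-- The explicit solution of the replicator-mutator equation with fitness `f(x) = x²`. -/
noncomputable def uTrig (σ : ℝ) (u₀ : ℝ → ℝ) (t x : ℝ) : ℝ :=
  (Real.sqrt (2 * Real.pi * σ * Real.tan (2 * σ * t)))⁻¹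
    * Real.exp (Real.tan (2 * σ * t) * x ^ 2 / (2 * σ))
    * (∫ y : ℝ, Real.exp (-(x / Real.cos (2 * σ * t) - y) ^ 2
        / (2 * σ * Real.tan (2 * σ * t))) * u₀ y)
    / (∫ y : ℝ, Real.exp (Real.tan (2 * σ * t) * y ^ 2 / (2 * σ)) * u₀ y)

/-- The maximal existence time `T` for the fitness `f(x) = x²`. -/
noncomputable def Tmax (σ : ℝ) (u₀ : ℝ → ℝ) : ℝ :=
  sSup {t : ℝ | 0 ≤ t ∧ t < Real.pi / (4 * σ) ∧
    MeasureTheory.Integrable (fun y : ℝ => Real.exp (Real.tan (2 * σ * t) * y ^ 2 / (2 * σ)) * u₀ y)}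

open Real Set Topology Function

lemma integral_exp_neg_mul_sub_sq (b m : ℝ) : ∫ x : ℝ, exp (-b * (x - m) ^ 2) = √(π / b) := by
  rw [integral_sub_right_eq_self (fun x => exp (-b * x ^ 2)) m, integral_gaussian]

section GaussianKernel

variable {b : ℝ} (a : ℝ) {g : ℝ → ℝ}

lemma integrable_gaussian_kernel_mul (hb : 0 < b) (hg : Integrable g) :
    Integrable (uncurry fun x y => exp (-b * (x - a * y) ^ 2) * g y) (volume.prod volume) := by
  have hmeas : AEStronglyMeasurable (uncurry fun x y => exp (-b * (x - a * y) ^ 2) * g y)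
      (volume.prod volume) :=
    (by fun_prop : Continuous fun p : ℝ × ℝ => exp (-b * (p.1 - a * p.2) ^ 2))
      |>.aestronglyMeasurable.mul hg.aestronglyMeasurable.comp_snd
  refine (integrable_prod_iff' hmeas).2 ⟨ae_of_all _ fun y => ?_, ?_⟩
  · exact ((integrable_exp_neg_mul_sq hb).comp_sub_right (a * y)).mul_const (g y)
  · simp only [uncurry_apply_pair, norm_mul, norm_of_nonneg (exp_pos _).le, integral_mul_const,
      integral_exp_neg_mul_sub_sq]
    exact hg.norm.const_mul _

lemma integral_integral_gaussian_kernel_mul (hb : 0 < b) (hg : Integrable g) :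
    ∫ x, ∫ y, exp (-b * (x - a * y) ^ 2) * g y = √(π / b) * ∫ y, g y := by
  rw [integral_integral_swap (integrable_gaussian_kernel_mul a hb hg), ← integral_const_mul]
  simp only [integral_mul_const, integral_exp_neg_mul_sub_sq]

lemma integral_gaussian_kernel_mul_le (hb : 0 ≤ b) (hg : Integrable g) (hg₀ : ∀ y, 0 ≤ g y)
    (x : ℝ) : ∫ y, exp (-b * (x - a * y) ^ 2) * g y ≤ ∫ y, g y := by
  refine integral_mono_of_nonneg (ae_of_all _ fun y => mul_nonneg (exp_pos _).le (hg₀ y)) hg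
    (ae_of_all _ fun y => ?_)
  have : exp (-b * (x - a * y) ^ 2) ≤ 1 := exp_le_one_iff.2 (by nlinarith [sq_nonneg (x - a * y)])
  simpa using mul_le_mul_of_nonneg_right this (hg₀ y)

end GaussianKernel

lemma tan_mul_sq_div_add_neg_sq_div_eq {σ θ : ℝ} (hσ : σ ≠ 0) (hs : sin θ ≠ 0) (hc : cos θ ≠ 0)
    (x y : ℝ) :
    tan θ * x ^ 2 / (2 * σ) + -(x / cos θ - y) ^ 2 / (2 * σ * tan θ)
      = -(2 * σ * tan θ)⁻¹ * (x - (cos θ)⁻¹ * y) ^ 2 + tan θ * y ^ 2 / (2 * σ) := by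
  rw [tan_eq_sin_div_cos]
  field_simp
  linear_combination (x ^ 2 - y ^ 2) * sin_sq_add_cos_sq θ

noncomputable def tilt (σ τ : ℝ) (u₀ : ℝ → ℝ) (y : ℝ) : ℝ := exp (τ * y ^ 2 / (2 * σ)) * u₀ y

section Tilt

variable {σ τ : ℝ} {u₀ : ℝ → ℝ}

lemma tilt_nonneg (hu₀ : ∀ y, 0 ≤ u₀ y) (y : ℝ) : 0 ≤ tilt σ τ u₀ y :=
  mul_nonneg (exp_pos _).le (hu₀ y)

lemma one_le_integral_tilt (hσ : 0 < σ) (hτ : 0 ≤ τ) (hu₀ : ∀ y, 0 ≤ u₀ y)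
    (hmass : ∫ y, u₀ y = 1) (hint : Integrable (tilt σ τ u₀)) : 1 ≤ ∫ y, tilt σ τ u₀ y := by
  rw [← hmass]
  refine integral_mono (.of_integral_ne_zero (by simp [hmass])) hint fun y => ?_
  simpa [tilt] using mul_le_mul_of_nonneg_right
    (one_le_exp (by positivity : 0 ≤ τ * y ^ 2 / (2 * σ))) (hu₀ y)

end Tilt

section Quadratic

variable {σ t : ℝ} {u₀ : ℝ → ℝ}

lemma two_mul_mul_mem_Ioo (hσ : 0 < σ) (ht : t ∈ Ioo 0 (π / (4 * σ))) :
    2 * σ * t ∈ Ioo 0 (π / 2) := by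
  obtain ⟨ht₀, ht₁⟩ := ht
  rw [lt_div_iff₀ (by positivity)] at ht₁
  exact ⟨by positivity, by linarith⟩

lemma tan_two_mul_mul_pos (hσ : 0 < σ) (ht : t ∈ Ioo 0 (π / (4 * σ))) :
    0 < tan (2 * σ * t) :=
  tan_pos_of_pos_of_lt_pi_div_two (two_mul_mul_mem_Ioo hσ ht).1 (two_mul_mul_mem_Ioo hσ ht).2

lemma uTrig_eq_gaussian_kernel (hσ : 0 < σ) (ht : t ∈ Ioo 0 (π / (4 * σ))) (x : ℝ) :
    uTrig σ u₀ t x = (√(2 * π * σ * tan (2 * σ * t)))⁻¹ *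
      (∫ y, exp (-(2 * σ * tan (2 * σ * t))⁻¹ * (x - (cos (2 * σ * t))⁻¹ * y) ^ 2) *
        tilt σ (tan (2 * σ * t)) u₀ y) / ∫ y, tilt σ (tan (2 * σ * t)) u₀ y := by
  obtain ⟨hθ₀, hθ₁⟩ := two_mul_mul_mem_Ioo hσ ht
  have hs : sin (2 * σ * t) ≠ 0 := (sin_pos_of_pos_of_lt_pi hθ₀ (by linarith [pi_pos])).ne'
  have hc : cos (2 * σ * t) ≠ 0 := (cos_pos_of_mem_Ioo ⟨by linarith, hθ₁⟩).ne'
  rw [uTrig, mul_assoc _ (exp _), ← integral_const_mul]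
  congr 3 with y
  rw [tilt, ← mul_assoc, ← mul_assoc, ← exp_add, ← exp_add,
    tan_mul_sq_div_add_neg_sq_div_eq hσ.ne' hs hc]

lemma uTrig_nonneg (hσ : 0 < σ) (ht : t ∈ Ioo 0 (π / (4 * σ))) (hu₀ : ∀ y, 0 ≤ u₀ y) (x : ℝ) :
    0 ≤ uTrig σ u₀ t x := by
  rw [uTrig_eq_gaussian_kernel hσ ht]
  exact div_nonneg (mul_nonneg (by positivity) (integral_nonneg fun y =>
    mul_nonneg (exp_pos _).le (tilt_nonneg hu₀ y))) (integral_nonneg (tilt_nonneg hu₀))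

lemma uTrig_le (hσ : 0 < σ) (ht : t ∈ Ioo 0 (π / (4 * σ))) (hu₀ : ∀ y, 0 ≤ u₀ y)
    (hint : Integrable (tilt σ (tan (2 * σ * t)) u₀)) (x : ℝ) :
    uTrig σ u₀ t x ≤ (√(2 * π * σ * tan (2 * σ * t)))⁻¹ := by
  have hτ := tan_two_mul_mul_pos hσ ht
  rw [uTrig_eq_gaussian_kernel hσ ht, mul_div_assoc]
  refine mul_le_of_le_one_right (by positivity) (div_le_one_of_le₀ ?_ (integral_nonneg ?_))
  · exact integral_gaussian_kernel_mul_le _ (by positivity) hint (tilt_nonneg hu₀) x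
  · exact tilt_nonneg hu₀

lemma integral_uTrig (hσ : 0 < σ) (ht : t ∈ Ioo 0 (π / (4 * σ))) (hu₀ : ∀ y, 0 ≤ u₀ y)
    (hmass : ∫ y, u₀ y = 1) (hint : Integrable (tilt σ (tan (2 * σ * t)) u₀)) :
    ∫ x, uTrig σ u₀ t x = 1 := by
  have hτ := tan_two_mul_mul_pos hσ ht
  have hD := one_le_integral_tilt hσ hτ.le hu₀ hmass hint
  have hK : 0 < √(2 * π * σ * tan (2 * σ * t)) := sqrt_pos.2 (by positivity)
  have hb : 0 < (2 * σ * tan (2 * σ * t))⁻¹ := by positivity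
  simp only [uTrig_eq_gaussian_kernel hσ ht, integral_div, integral_const_mul,
    integral_integral_gaussian_kernel_mul _ hb hint, div_inv_eq_mul]
  rw [show π * (2 * σ * tan (2 * σ * t)) = 2 * π * σ * tan (2 * σ * t) by ring]
  field_simp

end Quadratic

lemma tendsto_inv_sqrt_tan {σ : ℝ} (hσ : 0 < σ) :
    Tendsto (fun t => (√(2 * π * σ * tan (2 * σ * t)))⁻¹) (𝓝[<] (π / (4 * σ))) (𝓝 0) := by
  have hθ : Tendsto (fun t => 2 * σ * t) (𝓝[<] (π / (4 * σ))) (𝓝[<] (π / 2)) := by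
    have h : 2 * σ * (π / (4 * σ)) = π / 2 := by field_simp; ring
    refine tendsto_nhdsWithin_of_tendsto_nhds_of_eventually_within _ ?_ ?_
    · rw [← h]
      exact ((continuous_const_mul (2 * σ)).tendsto _).mono_left nhdsWithin_le_nhds
    · filter_upwards [self_mem_nhdsWithin] with t ht
      rw [mem_Iio, ← h]
      exact mul_lt_mul_of_pos_left ht (by positivity)
  exact tendsto_inv_atTop_zero.comp <| tendsto_sqrt_atTop.comp <|
    (tendsto_tan_pi_div_two.comp hθ).const_mul_atTop (by positivity)

theorem extinction_at_THeat_pos_quadratic_general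
    (σ : ℝ) (hσ : 0 < σ) (u₀ : ℝ → ℝ)
    (hnn : ∀ x, 0 ≤ u₀ x) (hmass : ∫ y : ℝ, u₀ y = 1)
    (hint : ∀ t : ℝ, 0 ≤ t → t < Real.pi / (4 * σ) →
      Integrable (fun y : ℝ => Real.exp (Real.tan (2 * σ * t) * y ^ 2 / (2 * σ)) * u₀ y)) :
    (∀ t : ℝ, 0 < t → t < Real.pi / (4 * σ) →
      (∫ x : ℝ, uTrig σ u₀ t x) = 1 ∧
      ∀ x : ℝ, 0 ≤ uTrig σ u₀ t x ∧
        uTrig σ u₀ t x ≤ (Real.sqrt (2 * Real.pi * σ * Real.tan (2 * σ * t)))⁻¹) ∧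
    Tendsto (fun t => ⨆ x : ℝ, uTrig σ u₀ t x)
      (nhdsWithin (Real.pi / (4 * σ)) (Set.Iio (Real.pi / (4 * σ)))) (nhds 0) := by
  have hbounds : ∀ t : ℝ, 0 < t → t < π / (4 * σ) →
      (∫ x, uTrig σ u₀ t x) = 1 ∧
      ∀ x, 0 ≤ uTrig σ u₀ t x ∧ uTrig σ u₀ t x ≤ (√(2 * π * σ * tan (2 * σ * t)))⁻¹ :=
    fun t ht₀ ht₁ => ⟨integral_uTrig hσ ⟨ht₀, ht₁⟩ hnn hmass (hint t ht₀.le ht₁), fun x =>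
      ⟨uTrig_nonneg hσ ⟨ht₀, ht₁⟩ hnn x, uTrig_le hσ ⟨ht₀, ht₁⟩ hnn (hint t ht₀.le ht₁) x⟩⟩
  refine ⟨hbounds, squeeze_zero' ?_ ?_ (tendsto_inv_sqrt_tan hσ)⟩ <;>
    filter_upwards [Ioo_mem_nhdsLT (by positivity : (0 : ℝ) < π / (4 * σ))] with t ⟨ht₀, ht₁⟩
  · exact iSup_nonneg fun x => ((hbounds t ht₀ ht₁).2 x).1
  · exact Real.iSup_le (fun x => ((hbounds t ht₀ ht₁).2 x).2) (by positivity)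

theorem extinction_at_THeat_pos_quadratic
    (σ : ℝ) (hσ : 0 < σ) (u₀ : ℝ → ℝ) (hmeas : Measurable u₀)
    (hnn : ∀ x, 0 ≤ u₀ x) (hmass : ∫ y : ℝ, u₀ y = 1)
    (hint : ∀ t : ℝ, 0 ≤ t → t < Real.pi / (4 * σ) →
      Integrable (fun y : ℝ => Real.exp (Real.tan (2 * σ * t) * y ^ 2 / (2 * σ)) * u₀ y)) :
    (∀ t : ℝ, 0 < t → t < Real.pi / (4 * σ) →
      (∫ x : ℝ, uTrig σ u₀ t x) = 1 ∧
      ∀ x : ℝ, 0 ≤ uTrig σ u₀ t x ∧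
        uTrig σ u₀ t x ≤ (Real.sqrt (2 * Real.pi * σ * Real.tan (2 * σ * t)))⁻¹) ∧
    Tendsto (fun t => ⨆ x : ℝ, uTrig σ u₀ t x)
      (nhdsWithin (Real.pi / (4 * σ)) (Set.Iio (Real.pi / (4 * σ)))) (nhds 0) :=
  extinction_at_THeat_pos_quadratic_general σ hσ u₀ hnn hmass hint
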